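/- arXiv:2509.15466 — 5 statements merged into one kernel-verified Lean document; each statement's English description precedes it below -/
import Mathlib

section
/- Let H be an r-uniform hypergraph that is {0, ℓ}-intersecting for some 0 < ℓ < r (the intersection of any two distinct hyperedges has size 0 or ℓ). Define U(H) = {u ∈ V(H) : deg_H(u) ≥ r²} and C(H) = {C ⊆ V(H) : |C| = ℓ and C is the core of a sunflower in H with at least r² petals}. Then any two distinct members C, C' of C(H) are disjoint. -/
/-- In an `r`-uniform `{0,ℓ}`-intersecting hypergraph, any two distinct
`ℓ`-sets that are cores of sunflowers with at least `r²` petals are disjoint. -/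
theorem stmt_1 {α : Type*} [DecidableEq α] (r ℓ : ℕ) (hℓ : 0 < ℓ) (hℓr : ℓ < r)
    (H : Finset (Finset α))
    (hunif : ∀ A ∈ H, A.card = r)
    (hint : ∀ A ∈ H, ∀ B ∈ H, A ≠ B → (A ∩ B).card = 0 ∨ (A ∩ B).card = ℓ)
    (C C' : Finset α)
    (hC : C.card = ℓ ∧ ∃ P ⊆ H, r ^ 2 ≤ P.card ∧
      ∀ A ∈ P, ∀ B ∈ P, A ≠ B → A ∩ B = C)
    (hC' : C'.card = ℓ ∧ ∃ P ⊆ H, r ^ 2 ≤ P.card ∧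
      ∀ A ∈ P, ∀ B ∈ P, A ≠ B → A ∩ B = C')
    (hne : C ≠ C') :
    C ∩ C' = ∅ := by
  obtain ⟨hCcard, P, hPH, hPcard, hPsun⟩ := hC
  obtain ⟨hC'card, P', hP'H, hP'card, hP'sun⟩ := hC'
  by_contra hcon
  obtain ⟨x, hx⟩ := Finset.nonempty_iff_ne_empty.mpr hcon
  have hxC : x ∈ C := (Finset.mem_inter.mp hx).1
  have hxC' : x ∈ C' := (Finset.mem_inter.mp hx).2
  have hr2 : 2 ≤ r := by omega
  have hrr : r ^ 2 = r * r := sq r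
  have hPbig : 1 < P.card := by nlinarith
  have hP'big : 1 < P'.card := by nlinarith
  -- every member of a sunflower family contains its core
  have hcore : ∀ (Q : Finset (Finset α)) (D : Finset α), 1 < Q.card →
      (∀ A ∈ Q, ∀ B ∈ Q, A ≠ B → A ∩ B = D) → ∀ A ∈ Q, D ⊆ A := by
    intro Q D hQ hsun A hA
    obtain ⟨B, hB, hBA⟩ := Finset.exists_mem_ne hQ A
    rw [← hsun A hA B hB (Ne.symm hBA)]
    exact Finset.inter_subset_left
  have hsubC : ∀ A ∈ P, C ⊆ A := hcore P C hPbig hPsun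
  have hsubC' : ∀ B ∈ P', C' ⊆ B := hcore P' C' hP'big hP'sun
  -- key claim : C ⊆ B for every B ∈ P'
  have key : ∀ B ∈ P', C ⊆ B := by
    intro B hB
    have hxB : x ∈ B := hsubC' B hB hxC'
    have hBr : B.card = r := hunif B (hP'H hB)
    set P₀ := P.erase B with hP₀def
    have hP₀sub : P₀ ⊆ P := Finset.erase_subset _ _
    have hP₀card : r ^ 2 - 1 ≤ P₀.card := by
      have h := Finset.pred_card_le_card_erase (s := P) (a := B)
      rw [← hP₀def] at h
      omega
    have hinter : ∀ A ∈ P₀, (A ∩ B).card = ℓ := by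
      intro A hA
      have hAB : A ≠ B := Finset.ne_of_mem_erase hA
      have hAP : A ∈ P := Finset.mem_of_mem_erase hA
      rcases hint A (hPH hAP) B (hP'H hB) hAB with h0 | h
      · exfalso
        have : x ∈ A ∩ B := Finset.mem_inter.mpr ⟨hsubC A hAP hxC, hxB⟩
        have := Finset.card_pos.mpr ⟨x, this⟩
        omega
      · exact h
    -- double counting
    have hswap : ∑ A ∈ P₀, (A ∩ B).card
        = ∑ b ∈ B, (P₀.filter (fun A => b ∈ A)).card := by
      have h1 : ∀ A : Finset α, (A ∩ B).card
          = ∑ b ∈ B, if b ∈ A then 1 else 0 := by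
        intro A
        rw [← Finset.card_filter, Finset.filter_mem_eq_inter, Finset.inter_comm]
      simp only [h1, Finset.card_filter]
      exact Finset.sum_comm
    have hLHS : ∑ A ∈ P₀, (A ∩ B).card = ℓ * P₀.card := by
      rw [Finset.sum_congr rfl hinter, Finset.sum_const, smul_eq_mul, mul_comm]
    -- each b ∈ B \ C lies in at most one member of P₀
    have hone : ∀ b ∈ B, b ∉ C → (P₀.filter (fun A => b ∈ A)).card ≤ 1 := by
      intro b _ hbC
      rw [Finset.card_le_one]
      intro A hA A' hA'
      simp only [Finset.mem_filter] at hA hA'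
      by_contra hne'
      have : b ∈ A ∩ A' := Finset.mem_inter.mpr ⟨hA.2, hA'.2⟩
      rw [hPsun A (hP₀sub hA.1) A' (hP₀sub hA'.1) hne'] at this
      exact hbC this
    -- split B into B ∩ C and B \ C
    have hsplit : ∑ b ∈ B, (P₀.filter (fun A => b ∈ A)).card
        ≤ (B ∩ C).card * P₀.card + r := by
      calc ∑ b ∈ B, (P₀.filter (fun A => b ∈ A)).card
          = ∑ b ∈ B.filter (fun b => b ∈ C), (P₀.filter (fun A => b ∈ A)).card
            + ∑ b ∈ B.filter (fun b => ¬ b ∈ C), (P₀.filter (fun A => b ∈ A)).card :=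
            (Finset.sum_filter_add_sum_filter_not _ _ _).symm
        _ ≤ ∑ _b ∈ B.filter (fun b => b ∈ C), P₀.card
            + ∑ b ∈ B.filter (fun b => ¬ b ∈ C), 1 := by
            refine add_le_add (Finset.sum_le_sum fun b _ => Finset.card_filter_le _ _)
              (Finset.sum_le_sum fun b hb => ?_)
            have hb' := Finset.mem_filter.mp hb
            exact hone b hb'.1 hb'.2
        _ = (B ∩ C).card * P₀.card + (B.filter (fun b => ¬ b ∈ C)).card := by
            rw [Finset.sum_const, Finset.sum_const, smul_eq_mul, smul_eq_mul, mul_one,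
              Finset.filter_mem_eq_inter]
        _ ≤ (B ∩ C).card * P₀.card + r := by
            have h := Finset.card_filter_le B (fun b => ¬ b ∈ C)
            omega
    have hmain : ℓ * P₀.card ≤ (B ∩ C).card * P₀.card + r := by
      rw [← hLHS, hswap]; exact hsplit
    have hcle : (B ∩ C).card ≤ ℓ := by
      rw [← hCcard]; exact Finset.card_le_card Finset.inter_subset_right
    have hceq : (B ∩ C).card = ℓ := by
      by_contra hlt
      have h1 : (B ∩ C).card + 1 ≤ ℓ := by omega
      have h2 : ((B ∩ C).card + 1) * P₀.card ≤ ℓ * P₀.card :=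
        Nat.mul_le_mul_right _ h1
      have h3 : r + 2 ≤ r ^ 2 := by nlinarith
      rw [add_mul, one_mul] at h2
      omega
    have : B ∩ C = C := Finset.eq_of_subset_of_card_le Finset.inter_subset_right
      (by omega)
    intro a ha
    have h : a ∈ B ∩ C := by rw [this]; exact ha
    exact (Finset.mem_inter.mp h).1
  -- finish: pick two distinct members of P'
  obtain ⟨B, hBmem⟩ := Finset.card_pos.mp (by omega : 0 < P'.card)
  obtain ⟨B', hB'mem, hB'ne⟩ := Finset.exists_mem_ne hP'big B
  apply hne
  apply Finset.eq_of_subset_of_card_le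
  · intro a ha
    rw [← hP'sun B hBmem B' hB'mem (Ne.symm hB'ne)]
    exact Finset.mem_inter.mpr ⟨key B hBmem ha, key B' hB'mem ha⟩
  · omega
end

section
/- Let H be an r-uniform hypergraph that is {0, ℓ}-intersecting for some 0 < ℓ < r. Define C(H) as the set of ℓ-element vertex subsets C that are cores of sunflowers in H with at least r² petals. Then for every hyperedge A ∈ H and every C ∈ C(H), either C ⊆ A or A ∩ C = ∅. -/
/-- In an `r`-uniform `{0,ℓ}`-intersecting hypergraph, for every hyperedge
`A` and every `ℓ`-set `C` that is the core of a sunflower with at least `r²` petals,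
either `C ⊆ A` or `A ∩ C = ∅`. -/
theorem stmt_2 {α : Type*} [DecidableEq α] (r ℓ : ℕ) (hℓ : 0 < ℓ) (hℓr : ℓ < r)
    (H : Finset (Finset α))
    (hunif : ∀ A ∈ H, A.card = r)
    (hint : ∀ A ∈ H, ∀ B ∈ H, A ≠ B → (A ∩ B).card = 0 ∨ (A ∩ B).card = ℓ)
    (C : Finset α)
    (hC : C.card = ℓ ∧ ∃ P ⊆ H, r ^ 2 ≤ P.card ∧
      ∀ A ∈ P, ∀ B ∈ P, A ≠ B → A ∩ B = C)
    (A : Finset α) (hA : A ∈ H) :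
    C ⊆ A ∨ A ∩ C = ∅ := by
  obtain ⟨hCcard, P, hPH, hPcard, hPint⟩ := hC
  by_cases hsub : C ⊆ A
  · exact Or.inl hsub
  right
  by_contra hne
  have hACne : (A ∩ C).Nonempty := Finset.nonempty_iff_ne_empty.mpr hne
  obtain ⟨a, ha⟩ := hACne
  have hr2 : 2 ≤ r := by omega
  have hP2 : 1 < P.card := by nlinarith
  have hCB : ∀ B ∈ P, C ⊆ B := by
    intro B hB
    obtain ⟨B', hB', hBB'⟩ := Finset.exists_mem_ne hP2 B
    rw [← hPint B hB B' hB' (Ne.symm hBB')]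
    exact Finset.inter_subset_left
  have key : ∀ B ∈ P.erase A, ∃ x, x ∈ A ∧ x ∈ B ∧ x ∉ C := by
    intro B hB
    obtain ⟨hBA, hBP⟩ := Finset.mem_erase.mp hB
    have h0 : (A ∩ B).card = 0 ∨ (A ∩ B).card = ℓ := hint A hA B (hPH hBP) (Ne.symm hBA)
    have hAC : A ∩ C ⊆ A ∩ B := Finset.inter_subset_inter (le_refl A) (hCB B hBP)
    have hpos : 0 < (A ∩ B).card :=
      Finset.card_pos.mpr ⟨a, hAC ha⟩
    have hcard : (A ∩ B).card = ℓ := by omega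
    by_contra hcon
    push_neg at hcon
    have hsubC : A ∩ B ⊆ C := by
      intro x hx
      have hx' := Finset.mem_inter.mp hx
      exact hcon x hx'.1 hx'.2
    have heq : A ∩ B = C := Finset.eq_of_subset_of_card_le hsubC (by omega)
    exact hsub (heq ▸ Finset.inter_subset_left)
  have key' : ∀ B : Finset α, ∃ x, B ∈ P.erase A → x ∈ A ∧ x ∈ B ∧ x ∉ C := by
    intro B
    by_cases h : B ∈ P.erase A
    · obtain ⟨x, hx⟩ := key B h; exact ⟨x, fun _ => hx⟩
    · exact ⟨a, fun h' => absurd h' h⟩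
  choose f hf using key'
  have hcard2 : (P.erase A).card ≤ A.card := by
    apply Finset.card_le_card_of_injOn f
    · intro B hB; exact (hf B hB).1
    · intro B hB B' hB' heq
      by_contra hne'
      have h1 := hf B hB
      have h2 := hf B' hB'
      have hx : f B ∈ B ∩ B' := Finset.mem_inter.mpr ⟨h1.2.1, heq ▸ h2.2.1⟩
      rw [hPint B (Finset.mem_of_mem_erase hB) B' (Finset.mem_of_mem_erase hB') hne'] at hx
      exact h1.2.2 hx
  have hge : P.card - 1 ≤ (P.erase A).card := Finset.pred_card_le_card_erase
  have hAr : A.card = r := hunif A hA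
  have hP1 : P.card ≤ r + 1 := by omega
  have : r ^ 2 ≤ r + 1 := le_trans hPcard hP1
  nlinarith
end

section
/- For every even integer ℓ ≥ 4, there exists a 3-regular graph F on ℓ vertices together with a partition of its edge set into three perfect matchings M₁, M₂, M₃ such that (a) the union of any two of the matchings induces a Hamiltonian cycle of F, and (b) every Hamiltonian cycle of F is the union of two of the matchings M₁, M₂, M₃. -/
/-!
The matchings `M 0 = {2i, 2i+1}` and `M 2 = {2i+1, 2i+2} ∪ {ℓ-1, 0}` together form the cycle
`0, 1, …, ℓ-1`, and `M 1` consists of the chords `{0, 2}`, `{ℓ-3, ℓ-1}` and `{2i+1, 2i+4}`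
(`M i = matching ℓ i`, in which `v` is matched to `partner ℓ i v`).
A 2-regular subgraph `H` of the cubic graph `F = M 0 ⊔ M 1 ⊔ M 2` misses exactly one edge at
every vertex `v`; write `c v` for its colour. A missing edge is missing at both of its ends, and
for `c 0 = 0` or `c 0 = 1` this alone propagates the colour along the cycle, so `c` is constant.
For `c 0 = 2` it does not (the triangle `0, 1, 2` can be a component of `H`), but the first odd
vertex where the colour changes would make `{0, …, v+1}` a union of components of `H`, which is
impossible when `H` is connected. A constant `c = k` means `H = M (k+1) ⊔ M (k+2)`.
-/

open Function Set

namespace SimpleGraph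

variable {V : Type*} {G : SimpleGraph V}

lemma Reachable.mem_of_adj_closed {S : Set V} (hS : ∀ ⦃x y⦄, G.Adj x y → x ∈ S → y ∈ S)
    {u v : V} (h : G.Reachable u v) (hu : u ∈ S) : v ∈ S := by
  rw [reachable_iff_reflTransGen] at h
  induction h with
  | refl => exact hu
  | tail _ hxy ih => exact hS hxy ih

lemma connected_of_exists_reachable_lt (f : V → ℕ) (x₀ : V)
    (h : ∀ v, v ≠ x₀ → ∃ w, G.Reachable v w ∧ f w < f v) : G.Connected := by
  have reach : ∀ n v, f v = n → G.Reachable v x₀ := by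
    intro n
    induction n using Nat.strong_induction_on with
    | _ n ih =>
      intro v hv
      by_cases hx₀ : v = x₀
      · exact hx₀ ▸ Reachable.refl v
      · obtain ⟨w, hvw, hw⟩ := h v hx₀
        exact hvw.trans (ih _ (hv ▸ hw) w rfl)
  exact (connected_iff G).mpr ⟨fun u v => (reach _ u rfl).trans (reach _ v rfl).symm, ⟨x₀⟩⟩

lemma exists_forall_adj_iff_ne {v : V} {n : ℕ} (h : (G.neighborSet v).ncard = n)
    {x : Fin (n + 1) → V} (hx : Injective x) (hsub : G.neighborSet v ⊆ range x) :
    ∃ k, ∀ i, G.Adj v (x i) ↔ i ≠ k := by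
  have hcard : (range x \ G.neighborSet v).ncard = 1 := by
    rw [ncard_sdiff hsub ((finite_range x).subset hsub), ncard_range_of_injective hx, h,
      Nat.card_eq_fintype_card, Fintype.card_fin, Nat.add_sub_cancel_left]
  obtain ⟨y, hy⟩ := ncard_eq_one.mp hcard
  obtain ⟨k, rfl⟩ : y ∈ range x := (hy.symm ▸ mem_singleton y : y ∈ range x \ _).1
  refine ⟨k, fun i => ?_⟩
  have hi : x i ∈ range x \ G.neighborSet v ↔ i = k := by rw [hy, mem_singleton_iff, hx.eq_iff]
  simpa [mem_neighborSet] using hi.not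

end SimpleGraph

namespace FlawlessOneFactorization

open SimpleGraph

def partner (ℓ : ℕ) : Fin 3 → ℕ → ℕ
  | 0, v => if v % 2 = 0 then v + 1 else v - 1
  | 1, v => if v = 0 then 2 else if v = 2 then 0 else if v = ℓ - 3 then ℓ - 1
      else if v = ℓ - 1 then ℓ - 3 else if v % 2 = 0 then v - 3 else v + 3
  | 2, v => if v = 0 then ℓ - 1 else if v = ℓ - 1 then 0 else if v % 2 = 0 then v - 1 else v + 1

variable {ℓ : ℕ}

lemma partner_lt (hℓ : Even ℓ) (h4 : 4 ≤ ℓ) (i : Fin 3) {v : ℕ} (hv : v < ℓ) :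
    partner ℓ i v < ℓ := by
  have := Nat.even_iff.mp hℓ
  fin_cases i <;> grind [partner]

lemma partner_ne_self (h4 : 4 ≤ ℓ) (i : Fin 3) (v : ℕ) : partner ℓ i v ≠ v := by
  fin_cases i <;> grind [partner]

lemma partner_partner (hℓ : Even ℓ) (h4 : 4 ≤ ℓ) (i : Fin 3) {v : ℕ} (hv : v < ℓ) :
    partner ℓ i (partner ℓ i v) = v := by
  have := Nat.even_iff.mp hℓ
  fin_cases i <;> simp only [partner] <;> split_ifs <;> first | omega | contradiction

lemma partner_injective (hℓ : Even ℓ) (h4 : 4 ≤ ℓ) {v : ℕ} (hv : v < ℓ) :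
    Injective fun i => partner ℓ i v := by
  have := Nat.even_iff.mp hℓ
  intro i j h
  fin_cases i <;> fin_cases j <;> simp only [partner] at h ⊢ <;> split_ifs at h <;>
    omega

lemma partner_one_partner_two_lt (hℓ : Even ℓ) (h4 : 4 ≤ ℓ) {v : ℕ}
    (hodd : v % 2 = 1) : partner ℓ 1 (partner ℓ 2 v) < v := by
  have := Nat.even_iff.mp hℓ
  grind [partner]

def matching (ℓ : ℕ) (i : Fin 3) : SimpleGraph (Fin ℓ) :=
  fromRel fun v w => (w : ℕ) = partner ℓ i v

lemma matching_adj (hℓ : Even ℓ) (h4 : 4 ≤ ℓ) {i : Fin 3} {v w : Fin ℓ} :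
    (matching ℓ i).Adj v w ↔ (w : ℕ) = partner ℓ i v := by
  refine ⟨fun ⟨_, h⟩ => h.elim id fun h => ?_, fun h => ⟨?_, .inl h⟩⟩
  · rw [h, partner_partner hℓ h4 i w.2]
  · exact fun hvw => partner_ne_self h4 i v (h ▸ congrArg Fin.val hvw.symm)

lemma neighborSet_matching (hℓ : Even ℓ) (h4 : 4 ≤ ℓ) (i : Fin 3) (v : Fin ℓ) :
    (matching ℓ i).neighborSet v = {⟨partner ℓ i v, partner_lt hℓ h4 i v.2⟩} := by
  ext w
  rw [mem_neighborSet, matching_adj hℓ h4, mem_singleton_iff, Fin.ext_iff]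

lemma ncard_neighborSet_matching (hℓ : Even ℓ) (h4 : 4 ≤ ℓ) (i : Fin 3) (v : Fin ℓ) :
    ((matching ℓ i).neighborSet v).ncard = 1 := by
  rw [neighborSet_matching hℓ h4, ncard_singleton]

lemma disjoint_edgeSet_matching (hℓ : Even ℓ) (h4 : 4 ≤ ℓ) {i j : Fin 3} (hij : i ≠ j) :
    Disjoint (matching ℓ i).edgeSet (matching ℓ j).edgeSet := by
  refine Set.disjoint_left.mpr fun e hi hj => ?_
  induction e using Sym2.ind with
  | _ v w =>
    rw [mem_edgeSet, matching_adj hℓ h4] at hi hj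
    exact hij (partner_injective hℓ h4 v.2 (hi.symm.trans hj))

lemma ncard_neighborSet_matching_sup (hℓ : Even ℓ) (h4 : 4 ≤ ℓ) {i j : Fin 3} (hij : i ≠ j)
    (v : Fin ℓ) : ((matching ℓ i ⊔ matching ℓ j).neighborSet v).ncard = 2 := by
  rw [neighborSet_sup, neighborSet_matching hℓ h4, neighborSet_matching hℓ h4,
    singleton_union, ncard_pair]
  exact fun h => hij (partner_injective hℓ h4 v.2 (congrArg Fin.val h))

lemma neighborSet_cubic (hℓ : Even ℓ) (h4 : 4 ≤ ℓ) (v : Fin ℓ) :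
    (matching ℓ 0 ⊔ matching ℓ 1 ⊔ matching ℓ 2).neighborSet v =
      range fun i => ⟨partner ℓ i v, partner_lt hℓ h4 i v.2⟩ := by
  ext w
  simp only [neighborSet_sup, neighborSet_matching hℓ h4, mem_union, mem_singleton_iff,
    mem_range, Fin.exists_fin_succ, Fin.exists_fin_zero, Fin.succ_zero_eq_one,
    Fin.succ_one_eq_two, or_false, or_assoc, eq_comm]

lemma ncard_neighborSet_cubic (hℓ : Even ℓ) (h4 : 4 ≤ ℓ) (v : Fin ℓ) :
    ((matching ℓ 0 ⊔ matching ℓ 1 ⊔ matching ℓ 2).neighborSet v).ncard = 3 := by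
  rw [neighborSet_cubic hℓ h4, ncard_range_of_injective, Nat.card_eq_fintype_card,
    Fintype.card_fin]
  exact fun i j h => partner_injective hℓ h4 v.2 (congrArg Fin.val h)

lemma reachable_partner (hℓ : Even ℓ) (h4 : 4 ≤ ℓ) {i j k : Fin 3} (hk : k = i ∨ k = j)
    (v : Fin ℓ) :
    (matching ℓ i ⊔ matching ℓ j).Reachable v ⟨partner ℓ k v, partner_lt hℓ h4 k v.2⟩ := by
  refine Adj.reachable ?_
  rcases hk with rfl | rfl
  · exact .inl ((matching_adj hℓ h4).mpr rfl)
  · exact .inr ((matching_adj hℓ h4).mpr rfl)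

lemma connected_matching_sup (hℓ : Even ℓ) (h4 : 4 ≤ ℓ) {i j : Fin 3} (hij : i ≠ j) :
    (matching ℓ i ⊔ matching ℓ j).Connected := by
  wlog hlt : i < j generalizing i j
  · rw [sup_comm]; exact this hij.symm (by omega)
  have := Nat.even_iff.mp hℓ
  refine connected_of_exists_reachable_lt Fin.val ⟨0, by omega⟩ fun v hv => ?_
  have hv0 : (v : ℕ) ≠ 0 := fun h => hv (Fin.ext h)
  have step := fun k (hk : k = i ∨ k = j) => reachable_partner hℓ h4 hk v
  obtain ⟨rfl, rfl⟩ | ⟨rfl, rfl⟩ | ⟨rfl, rfl⟩ : i = 0 ∧ j = 1 ∨ i = 0 ∧ j = 2 ∨ i = 1 ∧ j = 2 := by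
    omega
  · by_cases hodd : (v : ℕ) % 2 = 1
    · exact ⟨_, step 0 (.inl rfl), by grind [partner]⟩
    · exact ⟨_, step 1 (.inr rfl), by grind [partner]⟩
  · by_cases hodd : (v : ℕ) % 2 = 1
    · exact ⟨_, step 0 (.inl rfl), by grind [partner]⟩
    · exact ⟨_, step 2 (.inr rfl), by grind [partner]⟩
  · by_cases hodd : (v : ℕ) % 2 = 1
    · exact ⟨_, (step 2 (.inr rfl)).trans (reachable_partner hℓ h4 (.inl rfl) _),
        partner_one_partner_two_lt hℓ h4 hodd⟩
    · exact ⟨_, step 1 (.inl rfl), by grind [partner]⟩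

/-- Read `c v` as the colour of the edge deleted at `v`: an edge is deleted at one end iff it is
deleted at the other. -/
def IsConsistent (ℓ : ℕ) (c : ℕ → Fin 3) : Prop :=
  ∀ v < ℓ, ∀ i, c (partner ℓ i v) = i ↔ c v = i

namespace IsConsistent

variable {c : ℕ → Fin 3}

lemma ne_of_partner_ne (hc : IsConsistent ℓ c) {v : ℕ} (hv : v < ℓ) {i : Fin 3}
    (h : c (partner ℓ i v) ≠ i) : c v ≠ i :=
  mt (hc v hv i).2 h

lemma eq_zero (hc : IsConsistent ℓ c) (hℓ : Even ℓ) (h0 : c 0 = 0) : ∀ v < ℓ, c v = 0 := by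
  have := Nat.even_iff.mp hℓ
  intro v
  induction v using Nat.strong_induction_on with
  | _ v ih =>
  intro hv
  have below : ∀ w < v, c w = 0 := fun w hw => ih w hw (by omega)
  rcases Nat.eq_zero_or_pos v with rfl | hpos
  · exact h0
  by_cases hodd : v % 2 = 1
  · exact (hc v hv 0).1 (below _ (by grind [partner]))
  · have h1 : c v ≠ 1 :=
      hc.ne_of_partner_ne hv (by rw [below _ (by grind [partner])]; decide)
    have h2 : c v ≠ 2 :=
      hc.ne_of_partner_ne hv (by rw [below _ (by grind [partner])]; decide)
    omega

lemma eq_one (hc : IsConsistent ℓ c) (hℓ : Even ℓ) (h4 : 4 ≤ ℓ) (h0 : c 0 = 1) :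
    ∀ v < ℓ, c v = 1 := by
  have := Nat.even_iff.mp hℓ
  intro v
  induction v using Nat.strong_induction_on with
  | _ v ih =>
  intro hv
  have below : ∀ w < v, c w = 1 := fun w hw => ih w hw (by omega)
  rcases Nat.eq_zero_or_pos v with rfl | hpos
  · exact h0
  by_cases hodd : v % 2 = 1
  · have hv0 : c v ≠ 0 :=
      hc.ne_of_partner_ne hv (by rw [below _ (by grind [partner])]; decide)
    have hv2 : c v ≠ 2 := by
      refine hc.ne_of_partner_ne hv ?_
      rw [(hc _ (partner_lt hℓ h4 2 hv) 1).1 (below _ (partner_one_partner_two_lt hℓ h4 hodd))]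
      decide
    omega
  · exact (hc v hv 1).1 (below _ (by grind [partner]))

lemma eq_two (hc : IsConsistent ℓ c) (hℓ : Even ℓ) (h4 : 4 ≤ ℓ) (h0 : c 0 = 2)
    (hopen : ∀ m, m + 2 ≤ ℓ → ∃ u ≤ m, ∃ i ≠ c u, m < partner ℓ i u) :
    ∀ v < ℓ, c v = 2 := by
  have := Nat.even_iff.mp hℓ
  intro v
  induction v using Nat.strong_induction_on with
  | _ v ih =>
  intro hv
  have below : ∀ w < v, c w = 2 := fun w hw => ih w hw (by omega)
  rcases Nat.eq_zero_or_pos v with rfl | hpos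
  · exact h0
  by_cases hodd : v % 2 = 1 ∧ v + 1 < ℓ
  · obtain ⟨hodd, hvℓ⟩ := hodd
    -- Otherwise `c v = 1` and `c (v + 1) = 0`, and no remaining edge leaves `{0, …, v + 1}`.
    by_contra hv2
    have hv1 : c v = 1 := by
      have : c v ≠ 0 :=
        hc.ne_of_partner_ne hv (by rw [below _ (by grind [partner])]; decide)
      omega
    have hw0 : c (v + 1) = 0 := by
      have hw1 : c (v + 1) ≠ 1 := hc.ne_of_partner_ne hvℓ (by
        rw [below _ (by grind [partner])]; decide)
      have hw2 : c (v + 1) ≠ 2 := hc.ne_of_partner_ne hvℓ (by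
        rw [show partner ℓ 2 (v + 1) = v by grind [partner], hv1]
        decide)
      omega
    obtain ⟨u, hu, i, hi, hlt⟩ := hopen (v + 1) (by omega)
    obtain hu | rfl | rfl : u < v ∨ u = v ∨ u = v + 1 := by omega
    · rw [below u hu] at hi
      obtain rfl | rfl : i = 0 ∨ i = 1 := by omega
      all_goals grind [partner]
    · rw [hv1] at hi
      obtain rfl | rfl : i = 0 ∨ i = 2 := by omega
      all_goals grind [partner]
    · rw [hw0] at hi
      obtain rfl | rfl : i = 1 ∨ i = 2 := by omega
      all_goals grind [partner]
  · exact (hc v hv 2).1 (below _ (by grind [partner]))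

lemma eq_apply_zero (hc : IsConsistent ℓ c) (hℓ : Even ℓ) (h4 : 4 ≤ ℓ)
    (hopen : ∀ m, m + 2 ≤ ℓ → ∃ u ≤ m, ∃ i ≠ c u, m < partner ℓ i u) :
    ∀ v < ℓ, c v = c 0 := by
  obtain h | h | h : c 0 = 0 ∨ c 0 = 1 ∨ c 0 = 2 := by omega
  all_goals rw [h]
  exacts [hc.eq_zero hℓ h, hc.eq_one hℓ h4 h, hc.eq_two hℓ h4 h hopen]

end IsConsistent

def DeletesColour (H : SimpleGraph (Fin ℓ)) (c : ℕ → Fin 3) : Prop :=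
  ∀ v w : Fin ℓ, H.Adj v w ↔ ∃ i ≠ c v, (w : ℕ) = partner ℓ i v

lemma exists_deletesColour (hℓ : Even ℓ) (h4 : 4 ≤ ℓ) {H : SimpleGraph (Fin ℓ)}
    (hle : H ≤ matching ℓ 0 ⊔ matching ℓ 1 ⊔ matching ℓ 2)
    (hdeg : ∀ v, (H.neighborSet v).ncard = 2) : ∃ c, DeletesColour H c := by
  have hk (v : Fin ℓ) : ∃ k, ∀ i, H.Adj v ⟨partner ℓ i v, partner_lt hℓ h4 i v.2⟩ ↔ i ≠ k := by
    refine exists_forall_adj_iff_ne (hdeg v)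
      (fun i j h => partner_injective hℓ h4 v.2 (congrArg Fin.val h)) ?_
    rw [← neighborSet_cubic hℓ h4 v]
    exact fun w hw => hle hw
  choose k hk using hk
  refine ⟨fun n => if h : n < ℓ then k ⟨n, h⟩ else 0, fun v w => ?_⟩
  simp only [v.2, dif_pos, Fin.eta]
  constructor
  · intro hvw
    have hw : w ∈ (matching ℓ 0 ⊔ matching ℓ 1 ⊔ matching ℓ 2).neighborSet v := hle hvw
    rw [neighborSet_cubic hℓ h4 v] at hw
    obtain ⟨i, rfl⟩ := hw
    exact ⟨i, (hk v i).1 hvw, rfl⟩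
  · rintro ⟨i, hi, hw⟩
    obtain rfl : w = ⟨_, partner_lt hℓ h4 i v.2⟩ := Fin.ext hw
    exact (hk v i).2 hi

namespace DeletesColour

variable {H : SimpleGraph (Fin ℓ)} {c : ℕ → Fin 3}

lemma isConsistent (hH : DeletesColour H c) (hℓ : Even ℓ) (h4 : 4 ≤ ℓ) : IsConsistent ℓ c := by
  have key (v : Fin ℓ) (i : Fin 3) :
      H.Adj v ⟨partner ℓ i v, partner_lt hℓ h4 i v.2⟩ ↔ c v ≠ i := by
    rw [hH, ne_comm]
    exact ⟨fun ⟨j, hj, h⟩ => partner_injective hℓ h4 v.2 h ▸ hj, fun h => ⟨i, h, rfl⟩⟩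
  intro v hv i
  have hback := key ⟨partner ℓ i v, partner_lt hℓ h4 i hv⟩ i
  simp only [partner_partner hℓ h4 i hv] at hback
  exact not_iff_not.mp (hback.symm.trans ((H.adj_comm _ _).trans (key ⟨v, hv⟩ i)))

lemma exists_lt_partner (hH : DeletesColour H c) (hconn : H.Connected) (h4 : 4 ≤ ℓ) :
    ∀ m, m + 2 ≤ ℓ → ∃ u ≤ m, ∃ i ≠ c u, m < partner ℓ i u := by
  intro m hm
  by_contra! hclosed
  have hlast : (⟨ℓ - 1, by omega⟩ : Fin ℓ) ∈ {w : Fin ℓ | (w : ℕ) ≤ m} := by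
    refine (hconn.preconnected ⟨0, by omega⟩ _).mem_of_adj_closed (fun u w huw hu => ?_)
      (Nat.zero_le m)
    obtain ⟨i, hi, hw⟩ := (hH u w).1 huw
    show (w : ℕ) ≤ m
    exact hw ▸ hclosed u hu i hi
  have : ℓ - 1 ≤ m := hlast
  omega

lemma eq_matching_sup (hH : DeletesColour H c) (hℓ : Even ℓ) (h4 : 4 ≤ ℓ) {k : Fin 3}
    (hk : ∀ v < ℓ, c v = k) : H = matching ℓ (k + 1) ⊔ matching ℓ (k + 2) := by
  have hne (i : Fin 3) : i ≠ k ↔ i = k + 1 ∨ i = k + 2 := by omega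
  ext v w
  simp only [hH v w, sup_adj, matching_adj hℓ h4, hk v v.2, hne, or_and_right, exists_or,
    exists_eq_left]

end DeletesColour

end FlawlessOneFactorization

open FlawlessOneFactorization in
/-- for every even `ℓ ≥ 4` there is a `3`-regular graph `F` on `ℓ`
vertices whose edge set is partitioned into three perfect matchings `M 0, M 1, M 2`
such that the union of any two of them is a Hamiltonian cycle of `F`
(a connected 2-regular spanning subgraph), and conversely every Hamiltonian cycle
of `F` is the union of two of the matchings.  (I.e. `f(ℓ) ≥ 3`: `F` admits a
flawless 1-factorization.) -/
theorem stmt_7 (ℓ : ℕ) (h4 : 4 ≤ ℓ) (heven : Even ℓ) :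
    ∃ (F : SimpleGraph (Fin ℓ)) (M : Fin 3 → SimpleGraph (Fin ℓ)),
      (∀ i, M i ≤ F) ∧
      (∀ i v, ((M i).neighborSet v).ncard = 1) ∧
      (∀ i j, i ≠ j → Disjoint (M i).edgeSet (M j).edgeSet) ∧
      (F = M 0 ⊔ M 1 ⊔ M 2) ∧
      (∀ v, (F.neighborSet v).ncard = 3) ∧
      (∀ i j, i ≠ j →
        (M i ⊔ M j).Connected ∧ ∀ v, ((M i ⊔ M j).neighborSet v).ncard = 2) ∧
      (∀ H : SimpleGraph (Fin ℓ), H ≤ F → H.Connected →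
        (∀ v, (H.neighborSet v).ncard = 2) → ∃ i j, i ≠ j ∧ H = M i ⊔ M j) := by
  refine ⟨_, matching ℓ, fun i => ?_, ncard_neighborSet_matching heven h4,
    fun i j => disjoint_edgeSet_matching heven h4, rfl, ncard_neighborSet_cubic heven h4,
    fun i j hij => ⟨connected_matching_sup heven h4 hij,
      ncard_neighborSet_matching_sup heven h4 hij⟩, fun H hle hconn hdeg => ?_⟩
  · obtain rfl | rfl | rfl : i = 0 ∨ i = 1 ∨ i = 2 := by omega
    exacts [le_sup_left.trans le_sup_left, le_sup_right.trans le_sup_left, le_sup_right]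
  · obtain ⟨c, hH⟩ := exists_deletesColour heven h4 hle hdeg
    have hconst := (hH.isConsistent heven h4).eq_apply_zero heven h4
      (hH.exists_lt_partner hconn h4)
    exact ⟨c 0 + 1, c 0 + 2, by omega, hH.eq_matching_sup heven h4 hconst⟩
end

section
/- Let G be a graph with an independent set W = {w₁, w₂, w₃} of size 3 that is contained in every induced copy of C₆ in G. Define V₁ = {v ∉ W : vw₁, vw₂ ∈ E(G), vw₃ ∉ E(G)}, V₂ = {v ∉ W : vw₂, vw₃ ∈ E(G), vw₁ ∉ E(G)}, V₃ = {v ∉ W : vw₃, vw₁ ∈ E(G), vw₂ ∉ E(G)}. Then every induced copy of C₆ in G has exactly one vertex in each of V₁, V₂, V₃, and hence the number of induced copies of C₆ in G is at most |V₁|·|V₂|·|V₃| ≤ (n/3)³ where n = |V(G)|. -/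
open SimpleGraph Finset

lemma key16 : ∀ p1 p2 p3 : Fin 6, p1 ≠ p2 → p1 ≠ p3 → p2 ≠ p3 →
    ¬(cycleGraph 6).Adj p1 p2 → ¬(cycleGraph 6).Adj p1 p3 → ¬(cycleGraph 6).Adj p2 p3 →
    ∃ q : Fin 6, (q ≠ p1 ∧ q ≠ p2 ∧ q ≠ p3 ∧ (cycleGraph 6).Adj q p1 ∧ (cycleGraph 6).Adj q p2 ∧
      ¬(cycleGraph 6).Adj q p3) ∧
    ∀ r : Fin 6, (r ≠ p1 ∧ r ≠ p2 ∧ r ≠ p3 ∧ (cycleGraph 6).Adj r p1 ∧ (cycleGraph 6).Adj r p2 ∧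
      ¬(cycleGraph 6).Adj r p3) → r = q := by
  simp only [cycleGraph_adj']
  decide

lemma aux16 {α : Type*} [DecidableEq α] (G : SimpleGraph α) (S : Finset α)
    (e : G.induce (S : Set α) ≃g SimpleGraph.cycleGraph 6)
    (wa wb wc : α) (ha : wa ∈ S) (hb : wb ∈ S) (hc : wc ∈ S)
    (hab : wa ≠ wb) (hac : wa ≠ wc) (hbc : wb ≠ wc)
    (nab : ¬G.Adj wa wb) (nac : ¬G.Adj wa wc) (nbc : ¬G.Adj wb wc)
    (V : Finset α)
    (hV : ∀ v, v ∈ V ↔ v ∉ ({wa, wb, wc} : Finset α) ∧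
      G.Adj v wa ∧ G.Adj v wb ∧ ¬G.Adj v wc) :
    (S ∩ V).card = 1 := by
  have ha' : wa ∈ (S : Set α) := ha
  have hb' : wb ∈ (S : Set α) := hb
  have hc' : wc ∈ (S : Set α) := hc
  set pa := e ⟨wa, ha'⟩ with hpa
  set pb := e ⟨wb, hb'⟩ with hpb
  set pc := e ⟨wc, hc'⟩ with hpc
  have hadj : ∀ u v : (S : Set α), (cycleGraph 6).Adj (e u) (e v) ↔ G.Adj u.1 v.1 := by
    intro u v
    rw [e.map_adj_iff]
    rfl
  have einj : Function.Injective e := e.toEquiv.injective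
  have hpab : pa ≠ pb := fun h => hab (congrArg Subtype.val (einj h))
  have hpac : pa ≠ pc := fun h => hac (congrArg Subtype.val (einj h))
  have hpbc : pb ≠ pc := fun h => hbc (congrArg Subtype.val (einj h))
  have npab : ¬(cycleGraph 6).Adj pa pb := fun h => nab ((hadj _ _).mp h)
  have npac : ¬(cycleGraph 6).Adj pa pc := fun h => nac ((hadj _ _).mp h)
  have npbc : ¬(cycleGraph 6).Adj pb pc := fun h => nbc ((hadj _ _).mp h)
  obtain ⟨q, ⟨hq1, hq2, hq3, hqa, hqb, hqc⟩, huniq⟩ :=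
    key16 pa pb pc hpab hpac hpbc npab npac npbc
  have heq : e (e.symm q) = q := e.apply_symm_apply q
  refine Finset.card_eq_one.mpr ⟨(e.symm q).1, Finset.eq_singleton_iff_unique_mem.mpr ⟨?_, ?_⟩⟩
  · refine Finset.mem_inter.mpr ⟨(e.symm q).2, (hV _).mpr ⟨?_, ?_, ?_, ?_⟩⟩
    · simp only [Finset.mem_insert, Finset.mem_singleton]
      push_neg
      refine ⟨fun h => hq1 ?_, fun h => hq2 ?_, fun h => hq3 ?_⟩
      · rw [← heq, hpa]; exact congrArg e (Subtype.ext h)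
      · rw [← heq, hpb]; exact congrArg e (Subtype.ext h)
      · rw [← heq, hpc]; exact congrArg e (Subtype.ext h)
    · exact (hadj (e.symm q) ⟨wa, ha'⟩).mp (by rw [heq]; exact hqa)
    · exact (hadj (e.symm q) ⟨wb, hb'⟩).mp (by rw [heq]; exact hqb)
    · intro h
      exact hqc (heq ▸ (hadj (e.symm q) ⟨wc, hc'⟩).mpr h)
  · intro b hbmem
    obtain ⟨hbS, hbV⟩ := Finset.mem_inter.mp hbmem
    obtain ⟨hbW, hba, hbb, hbc2⟩ := (hV b).mp hbV
    simp only [Finset.mem_insert, Finset.mem_singleton] at hbW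
    push_neg at hbW
    have hbS' : b ∈ (S : Set α) := hbS
    have hr : e ⟨b, hbS'⟩ = q := by
      refine huniq _ ⟨?_, ?_, ?_, ?_, ?_, ?_⟩
      · exact fun h => hbW.1 (congrArg Subtype.val (einj h))
      · exact fun h => hbW.2.1 (congrArg Subtype.val (einj h))
      · exact fun h => hbW.2.2 (congrArg Subtype.val (einj h))
      · exact (hadj _ _).mpr hba
      · exact (hadj _ _).mpr hbb
      · exact fun h => hbc2 ((hadj _ _).mp h)
    have : (⟨b, hbS'⟩ : (S : Set α)) = e.symm q := by
      rw [← hr]; exact (e.symm_apply_apply _).symm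
    exact congrArg Subtype.val this

/-- if `W = {w₁,w₂,w₃}` is an independent set contained in every
induced 6-cycle of `G`, and `V₁, V₂, V₃` are the sets of vertices outside `W`
adjacent to exactly the pairs `{w₁,w₂}`, `{w₂,w₃}`, `{w₃,w₁}` respectively, then
every induced 6-cycle meets each `Vᵢ` in exactly one vertex, and the number of
induced 6-cycles is at most `|V₁|·|V₂|·|V₃| ≤ (n/3)³`. -/
theorem stmt_16 {α : Type*} [Fintype α] [DecidableEq α] (G : SimpleGraph α)
    (w1 w2 w3 : α) (hne12 : w1 ≠ w2) (hne13 : w1 ≠ w3) (hne23 : w2 ≠ w3)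
    (hindep : ¬G.Adj w1 w2 ∧ ¬G.Adj w1 w3 ∧ ¬G.Adj w2 w3)
    (hW : ∀ S : Finset α, S.card = 6 →
      Nonempty (G.induce (S : Set α) ≃g SimpleGraph.cycleGraph 6) →
      w1 ∈ S ∧ w2 ∈ S ∧ w3 ∈ S)
    (V1 V2 V3 : Finset α)
    (hV1 : ∀ v, v ∈ V1 ↔ v ∉ ({w1, w2, w3} : Finset α) ∧
      G.Adj v w1 ∧ G.Adj v w2 ∧ ¬G.Adj v w3)
    (hV2 : ∀ v, v ∈ V2 ↔ v ∉ ({w1, w2, w3} : Finset α) ∧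
      G.Adj v w2 ∧ G.Adj v w3 ∧ ¬G.Adj v w1)
    (hV3 : ∀ v, v ∈ V3 ↔ v ∉ ({w1, w2, w3} : Finset α) ∧
      G.Adj v w3 ∧ G.Adj v w1 ∧ ¬G.Adj v w2) :
    (∀ S : Finset α, S.card = 6 →
      Nonempty (G.induce (S : Set α) ≃g SimpleGraph.cycleGraph 6) →
      (S ∩ V1).card = 1 ∧ (S ∩ V2).card = 1 ∧ (S ∩ V3).card = 1) ∧
    {S : Finset α | S.card = 6 ∧
        Nonempty (G.induce (S : Set α) ≃g SimpleGraph.cycleGraph 6)}.ncard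
      ≤ V1.card * V2.card * V3.card ∧
    ((V1.card : ℝ) * V2.card * V3.card ≤ ((Fintype.card α : ℝ) / 3) ^ 3) := by
  obtain ⟨n12, n13, n23⟩ := hindep
  -- permuted versions of the Vᵢ membership conditions
  have hset2 : ({w2, w3, w1} : Finset α) = {w1, w2, w3} := by
    ext x; simp [Finset.mem_insert]; tauto
  have hset3 : ({w3, w1, w2} : Finset α) = {w1, w2, w3} := by
    ext x; simp [Finset.mem_insert]; tauto
  have hV2' : ∀ v, v ∈ V2 ↔ v ∉ ({w2, w3, w1} : Finset α) ∧
      G.Adj v w2 ∧ G.Adj v w3 ∧ ¬G.Adj v w1 := by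
    intro v; rw [hset2]; exact hV2 v
  have hV3' : ∀ v, v ∈ V3 ↔ v ∉ ({w3, w1, w2} : Finset α) ∧
      G.Adj v w3 ∧ G.Adj v w1 ∧ ¬G.Adj v w2 := by
    intro v; rw [hset3]; exact hV3 v
  have part1 : ∀ S : Finset α, S.card = 6 →
      Nonempty (G.induce (S : Set α) ≃g SimpleGraph.cycleGraph 6) →
      (S ∩ V1).card = 1 ∧ (S ∩ V2).card = 1 ∧ (S ∩ V3).card = 1 := by
    intro S hS6 hne
    obtain ⟨e⟩ := hne
    obtain ⟨hw1, hw2, hw3⟩ := hW S hS6 ⟨e⟩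
    refine ⟨aux16 G S e w1 w2 w3 hw1 hw2 hw3 hne12 hne13 hne23 n12 n13 n23 V1 hV1, ?_, ?_⟩
    · exact aux16 G S e w2 w3 w1 hw2 hw3 hw1 hne23 (Ne.symm hne12) (Ne.symm hne13)
        n23 (fun h => n12 h.symm) (fun h => n13 h.symm) V2 hV2'
    · exact aux16 G S e w3 w1 w2 hw3 hw1 hw2 (Ne.symm hne13) (Ne.symm hne23) hne12
        (fun h => n13 h.symm) (fun h => n23 h.symm) n12 V3 hV3'
  refine ⟨part1, ?_, ?_⟩
  · -- counting part
    classical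
    set g : α × α × α → Finset α := fun p => {w1, w2, w3, p.1, p.2.1, p.2.2} with hg
    set T : Finset (Finset α) := (V1 ×ˢ V2 ×ˢ V3).image g with hT
    have hsub : {S : Finset α | S.card = 6 ∧
        Nonempty (G.induce (S : Set α) ≃g SimpleGraph.cycleGraph 6)} ⊆ (T : Set (Finset α)) := by
      rintro S ⟨hS6, hne⟩
      obtain ⟨h1, h2, h3⟩ := part1 S hS6 hne
      obtain ⟨a, hain⟩ := Finset.card_pos.mp (by rw [h1]; norm_num)
      obtain ⟨b, hbin⟩ := Finset.card_pos.mp (by rw [h2]; norm_num)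
      obtain ⟨c, hcin⟩ := Finset.card_pos.mp (by rw [h3]; norm_num)
      obtain ⟨haS, haV⟩ := Finset.mem_inter.mp hain
      obtain ⟨hbS, hbV⟩ := Finset.mem_inter.mp hbin
      obtain ⟨hcS, hcV⟩ := Finset.mem_inter.mp hcin
      obtain ⟨hw1, hw2, hw3⟩ := hW S hS6 hne
      obtain ⟨haW, ha1, ha2, ha3⟩ := (hV1 a).mp haV
      obtain ⟨hbW, hb2, hb3, hb1⟩ := (hV2 b).mp hbV
      obtain ⟨hcW, hc3, hc1, hc2⟩ := (hV3 c).mp hcV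
      simp only [Finset.mem_insert, Finset.mem_singleton] at haW hbW hcW
      push_neg at haW hbW hcW
      have hab : a ≠ b := fun h => hb1 (h ▸ ha1)
      have hac : a ≠ c := fun h => hc2 (h ▸ ha2)
      have hbc : b ≠ c := fun h => hc2 (h ▸ hb2)
      have hRsub : ({w1, w2, w3, a, b, c} : Finset α) ⊆ S := by
        intro x hx
        simp only [Finset.mem_insert, Finset.mem_singleton] at hx
        rcases hx with h|h|h|h|h|h <;> subst h <;> assumption
      have hRcard : ({w1, w2, w3, a, b, c} : Finset α).card = 6 := by
        rw [Finset.card_insert_of_notMem (by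
            simp only [Finset.mem_insert, Finset.mem_singleton]; push_neg
            exact ⟨hne12, hne13, Ne.symm haW.1, Ne.symm hbW.1, Ne.symm hcW.1⟩),
          Finset.card_insert_of_notMem (by
            simp only [Finset.mem_insert, Finset.mem_singleton]; push_neg
            exact ⟨hne23, Ne.symm haW.2.1, Ne.symm hbW.2.1, Ne.symm hcW.2.1⟩),
          Finset.card_insert_of_notMem (by
            simp only [Finset.mem_insert, Finset.mem_singleton]; push_neg
            exact ⟨Ne.symm haW.2.2, Ne.symm hbW.2.2, Ne.symm hcW.2.2⟩),
          Finset.card_insert_of_notMem (by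
            simp only [Finset.mem_insert, Finset.mem_singleton]; push_neg
            exact ⟨hab, hac⟩),
          Finset.card_insert_of_notMem (by
            simp only [Finset.mem_singleton]; exact hbc),
          Finset.card_singleton]
      have hSeq : S = ({w1, w2, w3, a, b, c} : Finset α) :=
        (Finset.eq_of_subset_of_card_le hRsub (by rw [hS6, hRcard])).symm
      refine Finset.mem_coe.mpr (Finset.mem_image.mpr ⟨(a, b, c), ?_, hSeq.symm⟩)
      exact Finset.mem_product.mpr ⟨haV, Finset.mem_product.mpr ⟨hbV, hcV⟩⟩
    calc {S : Finset α | S.card = 6 ∧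
        Nonempty (G.induce (S : Set α) ≃g SimpleGraph.cycleGraph 6)}.ncard
        ≤ (T : Set (Finset α)).ncard := Set.ncard_le_ncard hsub (Finset.finite_toSet T)
      _ = T.card := Set.ncard_coe_finset T
      _ ≤ (V1 ×ˢ V2 ×ˢ V3).card := Finset.card_image_le
      _ = V1.card * V2.card * V3.card := by
          rw [Finset.card_product, Finset.card_product, mul_assoc]
  · -- AM-GM part
    have hd12 : Disjoint V1 V2 := Finset.disjoint_left.mpr (by
      intro v h1 h2
      exact ((hV1 v).mp h1).2.2.2 ((hV2 v).mp h2).2.2.1)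
    have hd13 : Disjoint V1 V3 := Finset.disjoint_left.mpr (by
      intro v h1 h3
      exact ((hV1 v).mp h1).2.2.2 ((hV3 v).mp h3).2.1)
    have hd23 : Disjoint V2 V3 := Finset.disjoint_left.mpr (by
      intro v h2 h3
      exact ((hV2 v).mp h2).2.2.2 ((hV3 v).mp h3).2.2.1)
    have hsum : V1.card + V2.card + V3.card ≤ Fintype.card α := by
      have hd : Disjoint (V1 ∪ V2) V3 := Finset.disjoint_union_left.mpr ⟨hd13, hd23⟩
      calc V1.card + V2.card + V3.card
          = (V1 ∪ V2 ∪ V3).card := by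
            rw [Finset.card_union_of_disjoint hd, Finset.card_union_of_disjoint hd12]
        _ ≤ Fintype.card α := Finset.card_le_univ _ |>.trans_eq (Finset.card_univ)
    have hx : (0:ℝ) ≤ V1.card := Nat.cast_nonneg _
    have hy : (0:ℝ) ≤ V2.card := Nat.cast_nonneg _
    have hz : (0:ℝ) ≤ V3.card := Nat.cast_nonneg _
    have hsumR : (V1.card : ℝ) + V2.card + V3.card ≤ Fintype.card α := by
      exact_mod_cast hsum
    set x : ℝ := (V1.card : ℝ)
    set y : ℝ := (V2.card : ℝ)
    set z : ℝ := (V3.card : ℝ)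
    have hcube : (x + y + z)^3 ≤ (Fintype.card α : ℝ)^3 :=
      pow_le_pow_left₀ (by positivity) hsumR 3
    rw [div_pow, le_div_iff₀ (by norm_num)]
    nlinarith [mul_nonneg hx (sq_nonneg (y - z)), mul_nonneg hy (sq_nonneg (x - z)),
      mul_nonneg hz (sq_nonneg (x - y)), mul_nonneg (mul_nonneg hx hy) hz, hcube]
end

section
/- Let G be a graph and W = {w₁, w₂} a 2-element independent set contained in every induced copy of C₅ in G. Define V₁ = {v ∉ W : vw₁, vw₂ ∈ E(G)}, V₂ = {v ∉ W : vw₂ ∈ E(G), vw₁ ∉ E(G)}, V₃ = {v ∉ W : vw₁ ∈ E(G), vw₂ ∉ E(G)}. Then every induced copy of C₅ in G contains exactly one vertex from each of V₁, V₂, V₃, and so the number of induced copies of C₅ in G is at most |V₁|·|V₂|·|V₃|. -/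
lemma cyc5 : ∀ a b : Fin 5, a ≠ b → ¬(SimpleGraph.cycleGraph 5).Adj a b →
    ((Finset.univ.filter fun c => (SimpleGraph.cycleGraph 5).Adj c a ∧ (SimpleGraph.cycleGraph 5).Adj c b).card = 1 ∧
     (Finset.univ.filter fun c => (SimpleGraph.cycleGraph 5).Adj c b ∧ ¬(SimpleGraph.cycleGraph 5).Adj c a).card = 1 ∧
     (Finset.univ.filter fun c => (SimpleGraph.cycleGraph 5).Adj c a ∧ ¬(SimpleGraph.cycleGraph 5).Adj c b).card = 1) := by
  decide

lemma transfer_card {α : Type*} [DecidableEq α] {S : Finset α}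
    {H : SimpleGraph (↥(S : Set α))}
    (e : H ≃g SimpleGraph.cycleGraph 5) (P : α → Prop) [DecidablePred P]
    (Q : Fin 5 → Prop) [DecidablePred Q]
    (h : ∀ (v) (hv : v ∈ S), P v ↔ Q (e ⟨v, hv⟩)) :
    (S.filter P).card = (Finset.univ.filter Q).card := by
  apply Finset.card_bij (fun v hv => e ⟨v, Finset.mem_coe.mpr (Finset.mem_filter.mp hv).1⟩)
  · intro v hv
    obtain ⟨hvS, hP⟩ := Finset.mem_filter.mp hv
    exact Finset.mem_filter.mpr ⟨Finset.mem_univ _, (h v hvS).mp hP⟩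
  · intro u hu v hv hEq
    have h2 := e.toEquiv.injective hEq
    exact congrArg Subtype.val h2
  · intro c hc
    have hmem : ((e.symm c : ↥(S : Set α)) : α) ∈ S := Finset.mem_coe.mp (e.symm c).2
    have hq : Q c := (Finset.mem_filter.mp hc).2
    have hQ' : Q (e ⟨((e.symm c : ↥(S : Set α)) : α), Finset.mem_coe.mpr hmem⟩) := by
      have : (⟨((e.symm c : ↥(S : Set α)) : α), Finset.mem_coe.mpr hmem⟩ : ↥(S : Set α)) = e.symm c :=
        Subtype.eta _ _
      rw [this]
      simpa using hq
    refine ⟨((e.symm c : ↥(S : Set α)) : α), Finset.mem_filter.mpr ⟨hmem, (h _ hmem).mpr hQ'⟩, ?_⟩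
    have : (⟨((e.symm c : ↥(S : Set α)) : α), Finset.mem_coe.mpr hmem⟩ : ↥(S : Set α)) = e.symm c :=
      Subtype.eta _ _
    rw [this]
    simp

open Classical in
lemma part1_aux {α : Type*} [Fintype α] [DecidableEq α] (G : SimpleGraph α)
    (w1 w2 : α) (hne : w1 ≠ w2) (hindep : ¬G.Adj w1 w2)
    (V1 V2 V3 : Finset α)
    (hV1 : ∀ v, v ∈ V1 ↔ v ∉ ({w1, w2} : Finset α) ∧ G.Adj v w1 ∧ G.Adj v w2)
    (hV2 : ∀ v, v ∈ V2 ↔ v ∉ ({w1, w2} : Finset α) ∧ G.Adj v w2 ∧ ¬G.Adj v w1)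
    (hV3 : ∀ v, v ∈ V3 ↔ v ∉ ({w1, w2} : Finset α) ∧ G.Adj v w1 ∧ ¬G.Adj v w2)
    (S : Finset α) (hS5 : S.card = 5)
    (e : G.induce (S : Set α) ≃g SimpleGraph.cycleGraph 5)
    (hw1 : w1 ∈ S) (hw2 : w2 ∈ S) :
    (S ∩ V1).card = 1 ∧ (S ∩ V2).card = 1 ∧ (S ∩ V3).card = 1 := by
  set a := e ⟨w1, Finset.mem_coe.mpr hw1⟩ with ha
  set b := e ⟨w2, Finset.mem_coe.mpr hw2⟩ with hb
  have hab : a ≠ b := by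
    intro h
    exact hne (congrArg Subtype.val (e.toEquiv.injective h))
  have hnadj : ¬(SimpleGraph.cycleGraph 5).Adj a b := fun h => hindep (e.map_adj_iff.mp h)
  obtain ⟨c1, c2, c3⟩ := cyc5 a b hab hnadj
  have key1 : S ∩ V1 = S.filter (fun v => G.Adj v w1 ∧ G.Adj v w2) := by
    ext v
    simp only [Finset.mem_inter, Finset.mem_filter, hV1, Finset.mem_insert, Finset.mem_singleton]
    constructor
    · rintro ⟨h1, _, h2⟩; exact ⟨h1, h2⟩
    · rintro ⟨h1, h2, h3⟩
      exact ⟨h1, by push_neg; exact ⟨h2.ne, h3.ne⟩, h2, h3⟩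
  have key2 : S ∩ V2 = S.filter (fun v => G.Adj v w2 ∧ ¬G.Adj v w1) := by
    ext v
    simp only [Finset.mem_inter, Finset.mem_filter, hV2, Finset.mem_insert, Finset.mem_singleton]
    constructor
    · rintro ⟨h1, _, h2⟩; exact ⟨h1, h2⟩
    · rintro ⟨h1, h2, h3⟩
      refine ⟨h1, by push_neg; exact ⟨fun h => hindep (h ▸ h2), h2.ne⟩, h2, h3⟩
  have key3 : S ∩ V3 = S.filter (fun v => G.Adj v w1 ∧ ¬G.Adj v w2) := by
    ext v
    simp only [Finset.mem_inter, Finset.mem_filter, hV3, Finset.mem_insert, Finset.mem_singleton]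
    constructor
    · rintro ⟨h1, _, h2⟩; exact ⟨h1, h2⟩
    · rintro ⟨h1, h2, h3⟩
      refine ⟨h1, by push_neg; exact ⟨h2.ne, fun h => hindep ((G.adj_comm w1 w2).mpr (h ▸ h2))⟩, h2, h3⟩
  have tr1 : ∀ (v) (hv : v ∈ S), G.Adj v w1 ↔ (SimpleGraph.cycleGraph 5).Adj (e ⟨v, Finset.mem_coe.mpr hv⟩) a := by
    intro v hv
    rw [ha, e.map_adj_iff]
    exact Iff.rfl
  have tr2 : ∀ (v) (hv : v ∈ S), G.Adj v w2 ↔ (SimpleGraph.cycleGraph 5).Adj (e ⟨v, Finset.mem_coe.mpr hv⟩) b := by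
    intro v hv
    rw [hb, e.map_adj_iff]
    exact Iff.rfl
  refine ⟨?_, ?_, ?_⟩
  · rw [key1, transfer_card e _ (fun c => (SimpleGraph.cycleGraph 5).Adj c a ∧ (SimpleGraph.cycleGraph 5).Adj c b)
      (fun v hv => and_congr (tr1 v hv) (tr2 v hv))]
    exact c1
  · rw [key2, transfer_card e _ (fun c => (SimpleGraph.cycleGraph 5).Adj c b ∧ ¬(SimpleGraph.cycleGraph 5).Adj c a)
      (fun v hv => and_congr (tr2 v hv) (not_congr (tr1 v hv)))]
    exact c2
  · rw [key3, transfer_card e _ (fun c => (SimpleGraph.cycleGraph 5).Adj c a ∧ ¬(SimpleGraph.cycleGraph 5).Adj c b)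
      (fun v hv => and_congr (tr1 v hv) (not_congr (tr2 v hv)))]
    exact c3

/-- if `W = {w₁,w₂}` is a 2-element independent set contained in every
induced 5-cycle of `G`, and `V₁` consists of the vertices outside `W` adjacent to
both `w₁,w₂`, `V₂` of those adjacent to `w₂` only, and `V₃` of those adjacent to
`w₁` only, then every induced 5-cycle meets each `Vᵢ` in exactly one vertex, and the
number of induced 5-cycles is at most `|V₁|·|V₂|·|V₃|`. -/
theorem stmt_17 {α : Type*} [Fintype α] [DecidableEq α] (G : SimpleGraph α)
    (w1 w2 : α) (hne : w1 ≠ w2) (hindep : ¬G.Adj w1 w2)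
    (hW : ∀ S : Finset α, S.card = 5 →
      Nonempty (G.induce (S : Set α) ≃g SimpleGraph.cycleGraph 5) →
      w1 ∈ S ∧ w2 ∈ S)
    (V1 V2 V3 : Finset α)
    (hV1 : ∀ v, v ∈ V1 ↔ v ∉ ({w1, w2} : Finset α) ∧ G.Adj v w1 ∧ G.Adj v w2)
    (hV2 : ∀ v, v ∈ V2 ↔ v ∉ ({w1, w2} : Finset α) ∧ G.Adj v w2 ∧ ¬G.Adj v w1)
    (hV3 : ∀ v, v ∈ V3 ↔ v ∉ ({w1, w2} : Finset α) ∧ G.Adj v w1 ∧ ¬G.Adj v w2) :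
    (∀ S : Finset α, S.card = 5 →
      Nonempty (G.induce (S : Set α) ≃g SimpleGraph.cycleGraph 5) →
      (S ∩ V1).card = 1 ∧ (S ∩ V2).card = 1 ∧ (S ∩ V3).card = 1) ∧
    {S : Finset α | S.card = 5 ∧
        Nonempty (G.induce (S : Set α) ≃g SimpleGraph.cycleGraph 5)}.ncard
      ≤ V1.card * V2.card * V3.card := by
  classical
  have part1 : ∀ S : Finset α, S.card = 5 →
      Nonempty (G.induce (S : Set α) ≃g SimpleGraph.cycleGraph 5) →
      (S ∩ V1).card = 1 ∧ (S ∩ V2).card = 1 ∧ (S ∩ V3).card = 1 := by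
    intro S hS5 he
    obtain ⟨hw1, hw2⟩ := hW S hS5 he
    obtain ⟨e⟩ := he
    exact part1_aux G w1 w2 hne hindep V1 V2 V3 hV1 hV2 hV3 S hS5 e hw1 hw2
  refine ⟨part1, ?_⟩
  rcases Set.eq_empty_or_nonempty {S : Finset α | S.card = 5 ∧
      Nonempty (G.induce (S : Set α) ≃g SimpleGraph.cycleGraph 5)} with h0 | ⟨S₀, hS₀⟩
  · rw [h0, Set.ncard_empty]; exact Nat.zero_le _
  have hS₀ne : S₀.Nonempty := Finset.card_pos.mp (by rw [hS₀.1]; norm_num)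
  obtain ⟨x₀, _⟩ := hS₀ne
  set pick : Finset α → α := fun t => if h : t.Nonempty then h.choose else x₀ with hpick
  have pick_mem : ∀ t : Finset α, t.Nonempty → pick t ∈ t := fun t h => by
    simp only [hpick, dif_pos h]; exact h.choose_spec
  have pick_spec : ∀ t : Finset α, t.card = 1 → t = {pick t} := by
    intro t ht
    obtain ⟨x, hx⟩ := Finset.card_eq_one.mp ht
    have hne' : t.Nonempty := ⟨x, hx ▸ Finset.mem_singleton_self x⟩
    have hp : pick t ∈ t := by
      simp only [hpick, dif_pos hne']; exact hne'.choose_spec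
    rw [hx] at hp ⊢
    rw [Finset.mem_singleton] at hp
    rw [hp]
  -- disjointness facts
  have hw1V1 : w1 ∉ V1 := fun h => ((hV1 w1).mp h).1 (by simp)
  have hw1V2 : w1 ∉ V2 := fun h => ((hV2 w1).mp h).1 (by simp)
  have hw1V3 : w1 ∉ V3 := fun h => ((hV3 w1).mp h).1 (by simp)
  have hw2V1 : w2 ∉ V1 := fun h => ((hV1 w2).mp h).1 (by simp)
  have hw2V2 : w2 ∉ V2 := fun h => ((hV2 w2).mp h).1 (by simp)
  have hw2V3 : w2 ∉ V3 := fun h => ((hV3 w2).mp h).1 (by simp)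
  have d12 : Disjoint V1 V2 :=
    Finset.disjoint_left.mpr fun v h1 h2 => ((hV2 v).mp h2).2.2 ((hV1 v).mp h1).2.1
  have d13 : Disjoint V1 V3 :=
    Finset.disjoint_left.mpr fun v h1 h2 => ((hV3 v).mp h2).2.2 ((hV1 v).mp h1).2.2
  have d23 : Disjoint V2 V3 :=
    Finset.disjoint_left.mpr fun v h2 h3 => ((hV2 v).mp h2).2.2 ((hV3 v).mp h3).2.1
  have recon : ∀ T ∈ {S : Finset α | S.card = 5 ∧
      Nonempty (G.induce (S : Set α) ≃g SimpleGraph.cycleGraph 5)},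
      T = insert w1 (insert w2 ({pick (T ∩ V1)} ∪ {pick (T ∩ V2)} ∪ {pick (T ∩ V3)})) := by
    intro T hT
    obtain ⟨hT5, heT⟩ := hT
    obtain ⟨hw1T, hw2T⟩ := hW T hT5 heT
    obtain ⟨c1, c2, c3⟩ := part1 T hT5 heT
    set U := insert w1 (insert w2 ((T ∩ V1) ∪ (T ∩ V2) ∪ (T ∩ V3))) with hU
    have hsub : U ⊆ T := by
      intro v hv
      rcases Finset.mem_insert.mp hv with h | hv
      · exact h ▸ hw1T
      rcases Finset.mem_insert.mp hv with h | hv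
      · exact h ▸ hw2T
      rcases Finset.mem_union.mp hv with hv | hv
      · rcases Finset.mem_union.mp hv with hv | hv
        · exact (Finset.mem_inter.mp hv).1
        · exact (Finset.mem_inter.mp hv).1
      · exact (Finset.mem_inter.mp hv).1
    have dj1 : Disjoint (T ∩ V1) (T ∩ V2) :=
      d12.mono Finset.inter_subset_right Finset.inter_subset_right
    have dj2 : Disjoint ((T ∩ V1) ∪ (T ∩ V2)) (T ∩ V3) :=
      Finset.disjoint_union_left.mpr
        ⟨d13.mono Finset.inter_subset_right Finset.inter_subset_right,
         d23.mono Finset.inter_subset_right Finset.inter_subset_right⟩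
    have hXcard : ((T ∩ V1) ∪ (T ∩ V2) ∪ (T ∩ V3)).card = 3 := by
      rw [Finset.card_union_of_disjoint dj2, Finset.card_union_of_disjoint dj1, c1, c2, c3]
    have hw2X : w2 ∉ (T ∩ V1) ∪ (T ∩ V2) ∪ (T ∩ V3) := by
      simp only [Finset.mem_union, Finset.mem_inter, not_or]
      exact ⟨⟨fun h => hw2V1 h.2, fun h => hw2V2 h.2⟩, fun h => hw2V3 h.2⟩
    have hw1X : w1 ∉ insert w2 ((T ∩ V1) ∪ (T ∩ V2) ∪ (T ∩ V3)) := by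
      simp only [Finset.mem_insert, Finset.mem_union, Finset.mem_inter, not_or]
      exact ⟨hne, ⟨fun h => hw1V1 h.2, fun h => hw1V2 h.2⟩, fun h => hw1V3 h.2⟩
    have hUcard : U.card = 5 := by
      rw [hU, Finset.card_insert_of_notMem hw1X, Finset.card_insert_of_notMem hw2X, hXcard]
    have hUT : U = T := Finset.eq_of_subset_of_card_le hsub (by rw [hT5, hUcard])
    rw [← pick_spec _ c1, ← pick_spec _ c2, ← pick_spec _ c3]
    exact hUT.symm
  refine le_trans (Set.ncard_le_ncard_of_injOn
    (fun S => (pick (S ∩ V1), pick (S ∩ V2), pick (S ∩ V3)))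
    ?_ ?_ (V1 ×ˢ V2 ×ˢ V3).finite_toSet) ?_
  · intro S hS
    obtain ⟨hS5, heS⟩ := hS
    obtain ⟨c1, c2, c3⟩ := part1 S hS5 heS
    have h1 : pick (S ∩ V1) ∈ S ∩ V1 := pick_mem _ (Finset.card_pos.mp (by omega))
    have h2 : pick (S ∩ V2) ∈ S ∩ V2 := pick_mem _ (Finset.card_pos.mp (by omega))
    have h3 : pick (S ∩ V3) ∈ S ∩ V3 := pick_mem _ (Finset.card_pos.mp (by omega))
    simp only [Finset.coe_product, Set.mem_prod]
    exact ⟨(Finset.mem_inter.mp h1).2, (Finset.mem_inter.mp h2).2, (Finset.mem_inter.mp h3).2⟩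
  · intro S hS S' hS' hfeq
    rw [Prod.ext_iff, Prod.ext_iff] at hfeq
    obtain ⟨e1, e2, e3⟩ := hfeq
    rw [recon S hS, recon S' hS']
    simp only at e1 e2 e3
    rw [e1, e2, e3]
  · apply le_of_eq
    rw [Set.ncard_coe_finset, Finset.card_product, Finset.card_product, mul_assoc]
end
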